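/- False Extension 1 is false: there exist three i.i.d. unit-demand bidders and two items with a reduced form satisfying (a) Σ_j π_j(A) ≤ 1 for every type A (per-type demand constraint in expectation) and (b) each item individually satisfies Border's condition, yet the reduced form is infeasible. Concretely: each bidder has types A (probability ε) and B (probability 1−ε), with π_1(A)=π_2(A)=1/2 and π_1(B)=π_2(B)=0; this is infeasible for small ε since a type-A bidder must receive an item whenever present, but all three bidders may simultaneously be type A with only two items available. -/

import Mathlib

/-!
Every type profile has positive probability and a bidder never gets more than one item ex
post, so a type whose interim demand `π_1(A) + π_2(A)` is one must receive an item at every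
profile where it occurs. At the profile where all three bidders have type `A` this asks for
three items, but only two exist. Conditions (a) and (b) are direct computations.
-/

open Finset

theorem eq_one_of_sum_mul_eq_sum {β : Type*} {s : Finset β} {w x : β → ℝ}
    (hw : ∀ b ∈ s, 0 < w b) (hx : ∀ b ∈ s, x b ≤ 1)
    (h : ∑ b ∈ s, w b * x b = ∑ b ∈ s, w b) {b : β} (hb : b ∈ s) : x b = 1 := by
  have hslack : ∑ c ∈ s, w c * (1 - x c) = 0 := by
    simp only [mul_one_sub, sum_sub_distrib, h, sub_self]
  have hb0 := (sum_eq_zero_iff_of_nonneg fun c hc =>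
    mul_nonneg (hw c hc).le (sub_nonneg.2 (hx c hc))).1 hslack b hb
  have := (mul_eq_zero.1 hb0).resolve_left (hw b hb).ne'
  linarith

section Interim

variable {ι α κ : Type*} [Fintype ι] [DecidableEq ι] [Fintype α] [DecidableEq α] [Fintype κ]

/-- The interim probability that bidder `i`, reporting type `t`, receives item `j` under the
ex-post rule `φ`, when the other bidders' types are drawn i.i.d. from `μ`. -/
def interimAlloc (μ : α → ℝ) (φ : (ι → α) → ι → κ → ℝ) (i : ι) (t : α) (j : κ) : ℝ :=
  ∑ P : ι → α, if P i = t then (∏ l ∈ univ.erase i, μ (P l)) * φ P i j else 0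

variable {μ : α → ℝ} {φ : (ι → α) → ι → κ → ℝ} {π : κ → α → ℝ}

theorem sum_prod_erase_of_apply_eq (hμ : ∑ a, μ a = 1) (i : ι) (t : α) :
    ∑ P ∈ univ.filter (fun P : ι → α => P i = t), ∏ l ∈ univ.erase i, μ (P l) = 1 := by
  set f : ι → α → ℝ := fun l a => if l = i then (if a = t then 1 else 0) else μ a
  have hrow : ∀ l, ∑ a, f l a = 1 := fun l => by by_cases hl : l = i <;> simp [f, hl, hμ]
  have hterm : ∀ P : ι → α, ∏ l, f l (P l) =
      if P i = t then ∏ l ∈ univ.erase i, μ (P l) else 0 := fun P => by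
    rw [← mul_prod_erase univ _ (mem_univ i)]
    rw [prod_congr rfl fun l hl => if_neg (ne_of_mem_erase hl)]
    split_ifs <;> simp [f, *]
  rw [sum_filter, ← sum_congr rfl fun P _ => hterm P, ← Fintype.prod_sum]
  simp [hrow]

/-- The interim weights of the profiles with `P i = t` sum to one, so an interim demand of one
leaves no slack at any of them. -/
theorem sum_alloc_eq_one_of_interimAlloc (hμpos : ∀ a, 0 < μ a) (hμ : ∑ a, μ a = 1)
    (hdem : ∀ P i, ∑ j, φ P i j ≤ 1) (hmarg : ∀ i t j, interimAlloc μ φ i t j = π j t)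
    {t : α} (ht : ∑ j, π j t = 1) {P : ι → α} {i : ι} (hPi : P i = t) :
    ∑ j, φ P i j = 1 := by
  refine eq_one_of_sum_mul_eq_sum (s := univ.filter fun P : ι → α => P i = t)
    (w := fun P => ∏ l ∈ univ.erase i, μ (P l)) (x := fun P => ∑ j, φ P i j)
    (fun P _ => prod_pos fun l _ => hμpos _) (fun P _ => hdem P i) ?_
    (mem_filter.2 ⟨mem_univ _, hPi⟩)
  rw [sum_prod_erase_of_apply_eq hμ i t, ← ht]
  simp only [mul_sum]
  rw [sum_comm]
  refine sum_congr rfl fun j _ => ?_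
  rw [← hmarg i t j, interimAlloc, sum_filter]

theorem card_le_card_of_interimAlloc (hμpos : ∀ a, 0 < μ a) (hμ : ∑ a, μ a = 1)
    (hitem : ∀ P j, ∑ i, φ P i j ≤ 1) (hdem : ∀ P i, ∑ j, φ P i j ≤ 1)
    (hmarg : ∀ i t j, interimAlloc μ φ i t j = π j t) {t : α} (ht : ∑ j, π j t = 1) :
    Fintype.card ι ≤ Fintype.card κ := by
  have hsat (i : ι) : ∑ j, φ (fun _ => t) i j = 1 :=
    sum_alloc_eq_one_of_interimAlloc hμpos hμ hdem hmarg ht rfl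
  have : (Fintype.card ι : ℝ) ≤ Fintype.card κ :=
    calc (Fintype.card ι : ℝ) = ∑ i, ∑ j, φ (fun _ => t) i j := by simp [hsat]
      _ = ∑ j, ∑ i, φ (fun _ => t) i j := sum_comm
      _ ≤ ∑ _j : κ, (1 : ℝ) := sum_le_sum fun j _ => hitem _ j
      _ = Fintype.card κ := by simp
  exact_mod_cast this

end Interim

/-- Type `A` is encoded as `true` and type `B` as `false`: `Pr[A] = ε`, `Pr[B] = 1 − ε`. -/
noncomputable def muE (ε : ℝ) : Bool → ℝ := fun t => if t then ε else 1 - ε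

noncomputable def piE : Fin 2 → Bool → ℝ := fun _ t => if t then 1/2 else 0

/-- False Extension 1 is false: the reduced form above satisfies (a) the per-type
expected demand constraint `Σ_j π_j(A) ≤ 1` and (b) Border's condition for each item
individually, yet (c) it is infeasible (no ex-post rule allocating each item to at most
one bidder and at most one item per bidder induces it). -/
theorem stmt_15 (ε : ℝ) (hε : 0 < ε) (hε' : ε < 1/2) :
    -- (a) demand constraints met in expectation for every type:
    (∀ t : Bool, ∑ j : Fin 2, piE j t ≤ 1) ∧
    -- (b) Border's condition holds for each item individually:
    (∀ (j : Fin 2) (S : Finset Bool),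
      (3 : ℝ) * ∑ t ∈ S, piE j t * muE ε t ≤ 1 - (1 - ∑ t ∈ S, muE ε t) ^ 3) ∧
    -- (c) yet the reduced form is infeasible:
    ¬ ∃ φ : (Fin 3 → Bool) → Fin 3 → Fin 2 → ℝ,
        (∀ P i j, 0 ≤ φ P i j) ∧
        -- each item is awarded at most once:
        (∀ P (j : Fin 2), ∑ i, φ P i j ≤ 1) ∧
        -- unit demand: each bidder receives at most one item:
        (∀ P (i : Fin 3), ∑ j, φ P i j ≤ 1) ∧
        -- the interim marginals equal π:
        (∀ (i : Fin 3) (t : Bool) (j : Fin 2),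
          (∑ P : Fin 3 → Bool,
            if P i = t then (∏ l ∈ Finset.univ.erase i, muE ε (P l)) * φ P i j else 0)
          = piE j t) := by
  refine ⟨fun t => ?_, fun j S => ?_, ?_⟩
  · cases t <;> norm_num [piE]
  · fin_cases S <;> simp [piE, muE] <;>
      nlinarith [pow_pos hε 3, mul_pos hε (sub_pos.2 hε')]
  · rintro ⟨φ, -, hitem, hdem, hmarg⟩
    have hμpos (t : Bool) : 0 < muE ε t := by cases t <;> simp [muE] <;> linarith
    have hμ : ∑ t, muE ε t = 1 := by simp [muE]
    have := card_le_card_of_interimAlloc hμpos hμ hitem hdem hmarg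
      (t := true) (by simp [piE])
    simp at this
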